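/- Let k > 1 and let D be a (q^{init}_k, v₀)-rooted {q^{leaf}}-leaf-covering deduction tree of the BVASS B_k, where v₀(d_i) = v₀(d′_i) = 0 for all i < k. Then for each h with 0 < h ≤ tower(k−1), D contains 2^h pairwise incomparable nodes (none an ancestor of another) whose state label is q^{loop}_k and at which the value of d_{k−1} + d′_{k−1} is at most h. -/

import Mathlib

/-! Write `s` for `d_{k-1} + d'_{k-1}`. In a leaf-covering deduction tree of `B_k` whose lower
counters vanish, every `qinit j` node has `d_j ≥ tower j`. Indeed, a level-`j` node of value `s`
needs `d_j ≥ 2 ^ (tower (j-1) - s)`: leaving level `j` costs one unit of `d_j` and needs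
`d_{j-1} ≥ tower (j-1)`, while a round `qloop j → qinit j → q1 j → q2 j → split` at most doubles
`s + 1` and shares the result between two branches.

Consequently a `qloop k` node with `s < tower (k-1)` cannot leave level `k`, and its next round
yields two `qloop k` nodes whose values add up to at most `2 (s + 1)`. For `s < h ≤ tower (k-1)`,
either both are `≤ h`, or one of them is `< h` and we repeat the round from it. Starting from the
root and applying this to each node found so far doubles their number `h` times. -/

/-- An alternating branching VASS with full zero tests (ABVASS₀):
states `Q`, counters indexed by `ι`, with unary, fork, split, and
full-zero-test rules. -/
structure ABVASS (Q ι : Type) where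
  Tu : Set (Q × (ι → ℤ) × Q)
  Tf : Set (Q × Q × Q)
  Ts : Set (Q × Q × Q)
  Tz : Set (Q × Q)

/-- Configurations: a state together with a vector of naturals. -/
abbrev Config (Q ι : Type) := Q × (ι → ℕ)

/-- Finite deduction trees labelled by configurations, with unary and
binary internal nodes. -/
inductive DTree (Q ι : Type) where
  | leaf : Config Q ι → DTree Q ι
  | node1 : Config Q ι → DTree Q ι → DTree Q ι
  | node2 : Config Q ι → DTree Q ι → DTree Q ι → DTree Q ι

namespace DTree

variable {Q ι : Type}

/-- The root label of a deduction tree. -/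
def root : DTree Q ι → Config Q ι
  | .leaf c => c
  | .node1 c _ => c
  | .node2 c _ _ => c

/-- Height: the maximum number of edges from the root to a leaf. -/
def height : DTree Q ι → ℕ
  | .leaf _ => 0
  | .node1 _ t => t.height + 1
  | .node2 _ t₁ t₂ => max t₁.height t₂.height + 1

/-- The list of leaf labels. -/
def leaves : DTree Q ι → List (Config Q ι)
  | .leaf c => [c]
  | .node1 _ t => t.leaves
  | .node2 _ t₁ t₂ => t₁.leaves ++ t₂.leaves

end DTree

variable {Q ι : Type}

/-- Unary rule, applied top-down: from `(q, v)` derive `(q₁, v + u)`,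
provided `v + u` is non-negative. -/
def UnaryStep (A : ABVASS Q ι) (c c' : Config Q ι) : Prop :=
  ∃ u, (c.1, u, c'.1) ∈ A.Tu ∧ ∀ i, (c'.2 i : ℤ) = (c.2 i : ℤ) + u i

/-- Full zero test: from `(q, 0)` derive `(q₁, 0)`. -/
def ZeroStep (A : ABVASS Q ι) (c c' : Config Q ι) : Prop :=
  (c.1, c'.1) ∈ A.Tz ∧ c.2 = (fun _ => 0) ∧ c'.2 = (fun _ => 0)

/-- Fork (children copy the parent's vector) or split (the parent's
vector is a sum of the children's). -/
def BinStep (A : ABVASS Q ι) (c c₁ c₂ : Config Q ι) : Prop :=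
  ((c.1, c₁.1, c₂.1) ∈ A.Tf ∧ c₁.2 = c.2 ∧ c₂.2 = c.2) ∨
  ((c.1, c₁.1, c₂.1) ∈ A.Ts ∧ c.2 = c₁.2 + c₂.2)

/-- A tree is a valid deduction tree when every internal node's children
are obtained by one of the permitted steps. -/
inductive ValidTree (step1 : Config Q ι → Config Q ι → Prop)
    (step2 : Config Q ι → Config Q ι → Config Q ι → Prop) : DTree Q ι → Prop
  | leaf (c : Config Q ι) : ValidTree step1 step2 (.leaf c)
  | one {c : Config Q ι} {t : DTree Q ι} :
      step1 c t.root → ValidTree step1 step2 t → ValidTree step1 step2 (.node1 c t)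
  | two {c : Config Q ι} {t₁ t₂ : DTree Q ι} :
      step2 c t₁.root t₂.root → ValidTree step1 step2 t₁ → ValidTree step1 step2 t₂ →
      ValidTree step1 step2 (.node2 c t₁ t₂)

/-- Deduction trees of an ABVASS₀ (standard semantics). -/
def IsDeduction (A : ABVASS Q ι) : DTree Q ι → Prop :=
  ValidTree (fun c c' => UnaryStep A c c' ∨ ZeroStep A c c') (BinStep A)

/-- `tower 0 = 1`, `tower (n+1) = 2 ^ tower n`. -/
def tower : ℕ → ℕ
  | 0 => 1
  | n + 1 => 2 ^ tower n

/-- States of the BVASS hierarchy `B_k`. -/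
inductive BSt where
  | qinit : ℕ → BSt
  | q1 : ℕ → BSt
  | q2 : ℕ → BSt
  | qloop : ℕ → BSt
  | qleaf : BSt
deriving DecidableEq

/-- Counters: `Sum.inl i` is `d_i` and `Sum.inr i` is `d'_i` (for `i ≥ 1`). -/
abbrev Cnt := ℕ ⊕ ℕ

/-- The unit vector on counter `c`. -/
def e (c : Cnt) : Cnt → ℤ := fun c' => if c' = c then 1 else 0

/-- The BVASS `B_k`: `B_1` has the single unary rule
`qinit 1 →^{-2 e_{d_1}} qleaf`; for `2 ≤ j ≤ k` we add the unary rules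
`qinit j →^{+e_{d_{j-1}}} q1 j`, `q1 j →^{-e_{d_{j-1}} + 2 e_{d'_{j-1}}} q1 j`,
`q1 j →^0 q2 j`, `q2 j →^{-e_{d'_{j-1}} + e_{d_{j-1}}} q2 j`,
`qloop j →^0 qinit j`, `qloop j →^{-e_{d_j}} qinit (j-1)`, and the split
rule `q2 j → qloop j + qloop j`. -/
def Bsys (k : ℕ) : ABVASS BSt Cnt where
  Tu := {r | r = (BSt.qinit 1, -(2 • e (Sum.inl 1)), BSt.qleaf) ∨
    ∃ j, 2 ≤ j ∧ j ≤ k ∧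
      (r = (BSt.qinit j, e (Sum.inl (j - 1)), BSt.q1 j) ∨
       r = (BSt.q1 j, -e (Sum.inl (j - 1)) + 2 • e (Sum.inr (j - 1)), BSt.q1 j) ∨
       r = (BSt.q1 j, 0, BSt.q2 j) ∨
       r = (BSt.q2 j, -e (Sum.inr (j - 1)) + e (Sum.inl (j - 1)), BSt.q2 j) ∨
       r = (BSt.qloop j, 0, BSt.qinit j) ∨
       r = (BSt.qloop j, -e (Sum.inl j), BSt.qinit (j - 1)))}
  Tf := ∅
  Ts := {r | ∃ j, 2 ≤ j ∧ j ≤ k ∧ r = (BSt.q2 j, BSt.qloop j, BSt.qloop j)}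
  Tz := ∅

/-- The subtree at a node, identified by a path from the root:
`false` selects the (first) child, `true` the second child. -/
def subtreeAt {Q ι : Type} : DTree Q ι → List Bool → Option (DTree Q ι)
  | t, [] => some t
  | .leaf _, _ :: _ => none
  | .node1 _ t, false :: p => subtreeAt t p
  | .node1 _ _, true :: _ => none
  | .node2 _ t₁ _, false :: p => subtreeAt t₁ p
  | .node2 _ _ t₂, true :: p => subtreeAt t₂ p

/-- Two nodes (paths) are incomparable when neither is an ancestor of
(i.e. a prefix of) the other. -/
def Incomparable (p₁ p₂ : List Bool) : Prop := ¬ p₁ <+: p₂ ∧ ¬ p₂ <+: p₁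

lemma Incomparable.symm {p q : List Bool} (h : Incomparable p q) : Incomparable q p := ⟨h.2, h.1⟩

lemma Incomparable.ne {p q : List Bool} (h : Incomparable p q) : p ≠ q := by
  rintro rfl
  exact h.1 (List.prefix_refl p)

lemma Incomparable.append_left (p : List Bool) {q q' : List Bool} (h : Incomparable q q') :
    Incomparable (p ++ q) (p ++ q') := by
  simpa only [Incomparable, List.prefix_append_right_inj] using h

lemma Incomparable.append {p p' : List Bool} (h : Incomparable p p') (q q' : List Bool) :
    Incomparable (p ++ q) (p' ++ q') := by
  have key : ∀ {p p' q q' : List Bool}, Incomparable p p' → ¬ p ++ q <+: p' ++ q' := by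
    intro p p' q q' h hpre
    rcases List.prefix_or_prefix_of_prefix ((p.prefix_append q).trans hpre)
      (p'.prefix_append q') with h' | h'
    exacts [h.1 h', h.2 h']
  exact ⟨key h, key h.symm⟩

lemma incomparable_false_true : Incomparable [false] [true] := by
  simp [Incomparable]

lemma subtreeAt_append (t : DTree Q ι) (p q : List Bool) :
    subtreeAt t (p ++ q) = (subtreeAt t p).bind (subtreeAt · q) := by
  induction p generalizing t with
  | nil => simp [subtreeAt]
  | cons b p ih => cases t <;> cases b <;> simp [subtreeAt, ih]

def NodeSatisfies (P : DTree Q ι → Prop) (t : DTree Q ι) (p : List Bool) : Prop :=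
  ∃ t', subtreeAt t p = some t' ∧ P t'

lemma nodeSatisfies_append {P : DTree Q ι → Prop} {t : DTree Q ι} {p q : List Bool} :
    NodeSatisfies P t (p ++ q) ↔ NodeSatisfies (NodeSatisfies P · q) t p := by
  simp only [NodeSatisfies, subtreeAt_append]
  cases subtreeAt t p <;> simp

def HasIncomparablePair (P : DTree Q ι → Prop) (t : DTree Q ι) : Prop :=
  ∃ p₁ p₂, Incomparable p₁ p₂ ∧ NodeSatisfies P t p₁ ∧ NodeSatisfies P t p₂

lemma HasIncomparablePair.of_nodeSatisfies {P : DTree Q ι → Prop} {t : DTree Q ι}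
    {p : List Bool} (h : NodeSatisfies (HasIncomparablePair P) t p) :
    HasIncomparablePair P t := by
  obtain ⟨t', ht', p₁, p₂, hinc, h₁, h₂⟩ := h
  refine ⟨p ++ p₁, p ++ p₂, hinc.append_left p, ?_, ?_⟩ <;>
    exact nodeSatisfies_append.2 ⟨t', ht', ‹_›⟩

def IsAntichainWith (P : DTree Q ι → Prop) (t : DTree Q ι) (S : Finset (List Bool)) : Prop :=
  (S : Set (List Bool)).Pairwise Incomparable ∧ ∀ p ∈ S, NodeSatisfies P t p

lemma isAntichainWith_singleton_nil {P : DTree Q ι → Prop} {t : DTree Q ι} (h : P t) :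
    IsAntichainWith P t {[]} :=
  ⟨by simp, by simpa [NodeSatisfies, subtreeAt] using h⟩

lemma IsAntichainWith.double {P P' : DTree Q ι → Prop} {t : DTree Q ι} {S : Finset (List Bool)}
    (hS : IsAntichainWith P t S) (hP : ∀ s, P s → HasIncomparablePair P' s) :
    ∃ S' : Finset (List Bool), S'.card = 2 * S.card ∧ IsAntichainWith P' t S' := by
  have hpair : ∀ p ∈ S, ∃ p₁ p₂, Incomparable p₁ p₂ ∧
      NodeSatisfies P' t (p ++ p₁) ∧ NodeSatisfies P' t (p ++ p₂) := fun p hp => by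
    obtain ⟨s, hs, hPs⟩ := hS.2 p hp
    obtain ⟨p₁, p₂, hinc, h₁, h₂⟩ := hP s hPs
    exact ⟨p₁, p₂, hinc, nodeSatisfies_append.2 ⟨s, hs, h₁⟩, nodeSatisfies_append.2 ⟨s, hs, h₂⟩⟩
  choose! p₁ p₂ hinc h₁ h₂ using hpair
  let f : List Bool × Bool → List Bool := fun x => x.1 ++ bif x.2 then p₂ x.1 else p₁ x.1
  have hf : ∀ x ∈ S ×ˢ Finset.univ, ∀ y ∈ S ×ˢ Finset.univ, x ≠ y → Incomparable (f x) (f y) := by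
    rintro ⟨p, b⟩ hx ⟨q, b'⟩ hy hne
    simp only [Finset.mem_product, Finset.mem_univ, and_true] at hx hy
    by_cases hpq : p = q
    · subst hpq
      have hbb : b ≠ b' := fun h => hne (by rw [h])
      cases b <;> cases b' <;> simp only [ne_eq, not_true_eq_false] at hbb <;>
        [exact (hinc p hx).append_left p; exact (hinc p hx).symm.append_left p]
    · exact (hS.1 hx hy hpq).append _ _
  refine ⟨(S ×ˢ Finset.univ).image f, ?_, ?_, ?_⟩
  · have hinj : Set.InjOn f ↑(S ×ˢ (Finset.univ : Finset Bool)) := fun x hx y hy hxy =>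
      by_contra fun hne => (hf x hx y hy hne).ne hxy
    rw [Finset.card_image_of_injOn hinj, Finset.card_product, Finset.card_univ, Fintype.card_bool, mul_comm]
  · rintro _ hfx _ hfy hne
    obtain ⟨x, hx, rfl⟩ := Finset.mem_image.1 hfx
    obtain ⟨y, hy, rfl⟩ := Finset.mem_image.1 hfy
    exact hf x hx y hy fun h => hne (h ▸ rfl)
  · simp only [Finset.mem_image, Finset.mem_product, Finset.mem_univ, and_true]
    rintro _ ⟨⟨p, b⟩, hp, rfl⟩
    cases b
    exacts [h₁ p hp, h₂ p hp]

def IsCoveringDeduction (A : ABVASS Q ι) (L : Set Q) (t : DTree Q ι) : Prop :=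
  IsDeduction A t ∧ ∀ l ∈ t.leaves, l.1 ∈ L

namespace IsCoveringDeduction

variable {A : ABVASS Q ι} {L : Set Q} {c : Config Q ι}

lemma leaf (h : IsCoveringDeduction A L (.leaf c)) : c.1 ∈ L :=
  h.2 c (by simp [DTree.leaves])

lemma node1 (hTz : A.Tz = ∅) {t : DTree Q ι} (h : IsCoveringDeduction A L (.node1 c t)) :
    UnaryStep A c t.root ∧ IsCoveringDeduction A L t := by
  obtain ⟨hD, hL⟩ := h
  cases hD with
  | one hs ht =>
    refine ⟨hs.resolve_right fun hz => ?_, ht, hL⟩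
    simpa [hTz] using hz.1

lemma node2 (hTf : A.Tf = ∅) {t₁ t₂ : DTree Q ι}
    (h : IsCoveringDeduction A L (.node2 c t₁ t₂)) :
    ((c.1, t₁.root.1, t₂.root.1) ∈ A.Ts ∧ c.2 = t₁.root.2 + t₂.root.2) ∧
      IsCoveringDeduction A L t₁ ∧ IsCoveringDeduction A L t₂ := by
  obtain ⟨hD, hL⟩ := h
  cases hD with
  | two hs h₁ h₂ =>
    refine ⟨hs.resolve_left fun hf => ?_, ⟨h₁, fun l hl => hL l (List.mem_append_left _ hl)⟩,
      ⟨h₂, fun l hl => hL l (List.mem_append_right _ hl)⟩⟩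
    simpa [hTf] using hf.1

end IsCoveringDeduction

namespace BSt

def level : BSt → ℕ
  | qinit j | q1 j | q2 j | qloop j => j
  | qleaf => 0

end BSt

open BSt

def LowZero (m : ℕ) (v : Cnt → ℕ) : Prop :=
  ∀ i, 1 ≤ i → i < m → v (.inl i) = 0 ∧ v (.inr i) = 0

lemma LowZero.mono {m m' : ℕ} {v : Cnt → ℕ} (h : LowZero m' v) (hm : m ≤ m') : LowZero m v :=
  fun i hi him => h i hi (him.trans_le hm)

lemma LowZero.of_add {m : ℕ} {v₁ v₂ : Cnt → ℕ} (h : LowZero m (v₁ + v₂)) :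
    LowZero m v₁ ∧ LowZero m v₂ := by
  refine ⟨fun i hi him => ?_, fun i hi him => ?_⟩ <;>
    · have := h i hi him
      simp only [Pi.add_apply, Nat.add_eq_zero_iff] at this
      tauto

/-- `weight j c ≤ 2 * h` is the invariant of a round started at a `qloop j` node of value `< h`:
in state `q1 j` a unit of `d_{j-1}` stands for the two units of `d'_{j-1}` it will become. -/
def weight (j : ℕ) (c : Config BSt Cnt) : ℕ :=
  match c.1 with
  | q1 _ => 2 * c.2 (.inl (j - 1)) + c.2 (.inr (j - 1))
  | q2 _ => c.2 (.inl (j - 1)) + c.2 (.inr (j - 1))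
  | _ => 2 * (c.2 (.inl (j - 1)) + c.2 (.inr (j - 1))) + 2

lemma weight_of_qinit_or_qloop (j : ℕ) {i : ℕ} {c : Config BSt Cnt}
    (hc : c.1 = qinit i ∨ c.1 = qloop i) :
    weight j c = 2 * (c.2 (.inl (j - 1)) + c.2 (.inr (j - 1))) + 2 := by
  rcases hc with hc | hc <;> simp [weight, hc]

section Steps

variable {k : ℕ} {c c' : Config BSt Cnt}

lemma unaryStep_bsys_low_counters {i : ℕ} (hs : UnaryStep (Bsys k) c c') (hi : i + 2 ≤ c.1.level) :
    c'.2 (.inl i) = c.2 (.inl i) ∧ c'.2 (.inr i) = c.2 (.inr i) := by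
  obtain ⟨u, hu, hv⟩ := hs
  have h₁ := hv (.inl i)
  have h₂ := hv (.inr i)
  simp only [Bsys, Set.mem_ofPred_eq, Prod.mk.injEq] at hu
  rcases hu with ⟨hq, rfl, -⟩ | ⟨j, -, -, ⟨hq, rfl, -⟩ | ⟨hq, rfl, -⟩ | ⟨hq, rfl, -⟩ |
      ⟨hq, rfl, -⟩ | ⟨hq, rfl, -⟩ | ⟨hq, rfl, -⟩⟩ <;>
    rw [hq] at hi <;> simp only [level] at hi <;> simp [e] at h₁ h₂ <;> omega

lemma LowZero.of_unaryStep {m : ℕ} (hs : UnaryStep (Bsys k) c c') (hm : m + 1 ≤ c.1.level)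
    (h : LowZero m c.2) : LowZero m c'.2 := fun i hi him => by
  obtain ⟨h₁, h₂⟩ := unaryStep_bsys_low_counters hs (i := i) (by omega)
  rw [h₁, h₂]
  exact h i hi him

lemma unaryStep_bsys_cases {j : ℕ} (hj : 2 ≤ j) (hs : UnaryStep (Bsys k) c c')
    (hc : c.1.level = j) :
    (c'.1.level = j ∧ weight j c' ≤ weight j c ∧ c'.2 (.inl j) = c.2 (.inl j)) ∨
    (c.1 = qloop j ∧ c'.1 = qinit (j - 1) ∧ c'.2 (.inl (j - 1)) = c.2 (.inl (j - 1)) ∧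
      c'.2 (.inl j) + 1 = c.2 (.inl j)) := by
  obtain ⟨u, hu, hv⟩ := hs
  have ha := hv (.inl (j - 1))
  have hb := hv (.inr (j - 1))
  have hn := hv (.inl j)
  simp only [Bsys, Set.mem_ofPred_eq, Prod.mk.injEq] at hu
  rcases hu with ⟨hq, rfl, hq'⟩ | ⟨j', -, -, ⟨hq, rfl, hq'⟩ | ⟨hq, rfl, hq'⟩ | ⟨hq, rfl, hq'⟩ |
      ⟨hq, rfl, hq'⟩ | ⟨hq, rfl, hq'⟩ | ⟨hq, rfl, hq'⟩⟩ <;>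
    rw [hq] at hc <;> simp only [level] at hc
  · omega
  all_goals
    subst hc
    simp [e, show j' - 1 ≠ j' by omega] at ha hb hn
    simp [weight, hq, hq', level]
    omega

lemma two_le_of_unaryStep_qinit_one (hs : UnaryStep (Bsys k) c c') (hc : c.1 = qinit 1) :
    2 ≤ c.2 (.inl 1) := by
  obtain ⟨u, hu, hv⟩ := hs
  have h := hv (.inl 1)
  simp only [Bsys, Set.mem_ofPred_eq, Prod.mk.injEq, hc] at hu
  rcases hu with ⟨-, rfl, -⟩ | ⟨j, hj, -, ⟨hq, -⟩ | ⟨hq, -⟩ | ⟨hq, -⟩ | ⟨hq, -⟩ | ⟨hq, -⟩ | ⟨hq, -⟩⟩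
  · simp [e] at h
    omega
  all_goals simp at hq
  omega

lemma exists_of_mem_bsys_Ts {c₁ c₂ : Config BSt Cnt} (h : (c.1, c₁.1, c₂.1) ∈ (Bsys k).Ts) :
    ∃ j, c.1 = q2 j ∧ c₁.1 = qloop j ∧ c₂.1 = qloop j := by
  simp only [Bsys, Set.mem_ofPred_eq, Prod.mk.injEq] at h
  obtain ⟨j, -, -, h⟩ := h
  exact ⟨j, h⟩

end Steps

lemma pow_le_pow_sub_add_pow_sub (T s₁ s₂ : ℕ) :
    2 ^ (T + 1 - (s₁ + s₂ + 1) / 2) ≤ 2 ^ (T - s₁) + 2 ^ (T - s₂) := by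
  wlog hs : s₁ ≤ s₂ generalizing s₁ s₂
  · rw [add_comm s₁, add_comm (2 ^ (T - s₁))]
    exact this s₂ s₁ (by omega)
  rcases le_or_gt s₂ (s₁ + 1) with h | h
  · calc 2 ^ (T + 1 - (s₁ + s₂ + 1) / 2) ≤ 2 ^ (T - s₂ + 1) :=
          Nat.pow_le_pow_right two_pos (by omega)
      _ = 2 ^ (T - s₂) + 2 ^ (T - s₂) := by ring
      _ ≤ 2 ^ (T - s₁) + 2 ^ (T - s₂) := by gcongr; omega
  · calc 2 ^ (T + 1 - (s₁ + s₂ + 1) / 2) ≤ 2 ^ (T - s₁) := Nat.pow_le_pow_right two_pos (by omega)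
      _ ≤ 2 ^ (T - s₁) + 2 ^ (T - s₂) := Nat.le_add_right _ _

theorem two_pow_le_of_level_eq {k j : ℕ} (hj : 2 ≤ j)
    (hexit : ∀ t, IsCoveringDeduction (Bsys k) {qleaf} t → LowZero (j - 1) t.root.2 →
      t.root.1 = qinit (j - 1) → tower (j - 1) ≤ t.root.2 (.inl (j - 1)))
    (t : DTree BSt Cnt) (ht : IsCoveringDeduction (Bsys k) {qleaf} t)
    (hlow : LowZero (j - 1) t.root.2) (hlev : t.root.1.level = j) :
    2 ^ (tower (j - 1) + 1 - (weight j t.root + 1) / 2) ≤ t.root.2 (.inl j) := by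
  induction t with
  | leaf c =>
    have hc : c.1 = qleaf := ht.leaf
    simp only [DTree.root, hc, level] at hlev
    omega
  | node1 c t ih =>
    obtain ⟨hs, ht⟩ := ht.node1 rfl
    have hlow' := hlow.of_unaryStep hs (by simp only [DTree.root] at hlev; omega)
    rcases unaryStep_bsys_cases hj hs hlev with ⟨hlev', hw, hn⟩ | ⟨hq, hq', ha, hn⟩
    · calc 2 ^ (tower (j - 1) + 1 - (weight j c + 1) / 2)
          ≤ 2 ^ (tower (j - 1) + 1 - (weight j t.root + 1) / 2) :=
            Nat.pow_le_pow_right two_pos (by omega)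
        _ ≤ c.2 (.inl j) := hn ▸ ih ht hlow' hlev'
    · have hT := hexit t ht hlow' hq'
      have hw := weight_of_qinit_or_qloop j (.inr hq)
      show 2 ^ (tower (j - 1) + 1 - (weight j c + 1) / 2) ≤ c.2 (.inl j)
      rw [Nat.sub_eq_zero_of_le (by omega), pow_zero]
      omega
  | node2 c t₁ t₂ ih₁ ih₂ =>
    obtain ⟨⟨hsplit, hsum⟩, ht₁, ht₂⟩ := ht.node2 rfl
    obtain ⟨j', hq, hq₁, hq₂⟩ := exists_of_mem_bsys_Ts hsplit
    simp only [DTree.root, hq, level] at hlev hlow ⊢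
    subst hlev
    rw [hsum] at hlow
    have h₁ := ih₁ ht₁ hlow.of_add.1 (by simp [hq₁, level])
    have h₂ := ih₂ ht₂ hlow.of_add.2 (by simp [hq₂, level])
    set T := tower (j' - 1)
    set s₁ := t₁.root.2 (.inl (j' - 1)) + t₁.root.2 (.inr (j' - 1))
    set s₂ := t₂.root.2 (.inl (j' - 1)) + t₂.root.2 (.inr (j' - 1))
    rw [weight_of_qinit_or_qloop _ (.inr hq₁),
      show T + 1 - (2 * s₁ + 2 + 1) / 2 = T - s₁ by omega] at h₁
    rw [weight_of_qinit_or_qloop _ (.inr hq₂),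
      show T + 1 - (2 * s₂ + 2 + 1) / 2 = T - s₂ by omega] at h₂
    have hw : weight j' c = s₁ + s₂ := by
      simp only [weight, hq, hsum, Pi.add_apply, s₁, s₂]
      ring
    calc 2 ^ (T + 1 - (weight j' c + 1) / 2) = 2 ^ (T + 1 - (s₁ + s₂ + 1) / 2) := by rw [hw]
      _ ≤ 2 ^ (T - s₁) + 2 ^ (T - s₂) := pow_le_pow_sub_add_pow_sub T s₁ s₂
      _ ≤ t₁.root.2 (.inl j') + t₂.root.2 (.inl j') := add_le_add h₁ h₂
      _ = c.2 (.inl j') := by rw [hsum]; rfl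

theorem tower_le_of_qinit {k : ℕ} (j : ℕ) (hj : 1 ≤ j) (t : DTree BSt Cnt)
    (ht : IsCoveringDeduction (Bsys k) {qleaf} t) (hlow : LowZero j t.root.2)
    (hq : t.root.1 = qinit j) : tower j ≤ t.root.2 (.inl j) := by
  induction j, hj using Nat.le_induction generalizing t with
  | base =>
    cases t with
    | leaf c =>
      have hc : c.1 = qleaf := ht.leaf
      simp [DTree.root, hc] at hq
    | node1 c t => exact two_le_of_unaryStep_qinit_one (ht.node1 rfl).1 hq
    | node2 c t₁ t₂ =>
      obtain ⟨j, hq', -⟩ := exists_of_mem_bsys_Ts (ht.node2 rfl).1.1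
      simp only [DTree.root] at hq
      simp [hq] at hq'
  | succ j hj ih =>
    have h := two_pow_le_of_level_eq (j := j + 1) (by omega) (by simpa using ih) t ht
      (hlow.mono (by omega)) (by simp [hq, level])
    obtain ⟨ha, hb⟩ := hlow j hj (by omega)
    rw [weight_of_qinit_or_qloop _ (.inl hq), Nat.add_sub_cancel, ha, hb] at h
    simpa [tower] using h

def LoopNode (k h : ℕ) (t : DTree BSt Cnt) : Prop :=
  IsCoveringDeduction (Bsys k) {qleaf} t ∧ LowZero (k - 1) t.root.2 ∧ t.root.1 = qloop k ∧
    t.root.2 (.inl (k - 1)) + t.root.2 (.inr (k - 1)) ≤ h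

theorem hasIncomparablePair_loopNode {k h : ℕ} (hk : 2 ≤ k) (hh : h ≤ tower (k - 1))
    (t : DTree BSt Cnt) (ht : IsCoveringDeduction (Bsys k) {qleaf} t)
    (hlow : LowZero (k - 1) t.root.2) (hlev : t.root.1.level = k) (hw : weight k t.root ≤ 2 * h) :
    HasIncomparablePair (LoopNode k h) t := by
  induction t with
  | leaf c =>
    have hc : c.1 = qleaf := ht.leaf
    simp only [DTree.root, hc, level] at hlev
    omega
  | node1 c t ih =>
    obtain ⟨hs, ht⟩ := ht.node1 rfl
    have hlow' := hlow.of_unaryStep hs (by simp only [DTree.root] at hlev; omega)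
    rcases unaryStep_bsys_cases hk hs hlev with ⟨hlev', hw', -⟩ | ⟨hq, hq', ha, -⟩
    · exact .of_nodeSatisfies (p := [false])
        ⟨t, by simp [subtreeAt], ih ht hlow' hlev' (hw'.trans hw)⟩
    · have hT := tower_le_of_qinit (k - 1) (by omega) t ht hlow' hq'
      have := weight_of_qinit_or_qloop k (.inr hq)
      simp only [DTree.root] at hw
      omega
  | node2 c t₁ t₂ ih₁ ih₂ =>
    obtain ⟨⟨hsplit, hsum⟩, ht₁, ht₂⟩ := ht.node2 rfl
    obtain ⟨j, hq, hq₁, hq₂⟩ := exists_of_mem_bsys_Ts hsplit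
    simp only [DTree.root, hq, level] at hlev hlow hw
    subst hlev
    rw [hsum] at hlow
    have hw₁ := weight_of_qinit_or_qloop j (.inr hq₁)
    have hw₂ := weight_of_qinit_or_qloop j (.inr hq₂)
    simp only [weight, hq, hsum, Pi.add_apply] at hw
    by_cases h₁ : t₁.root.2 (.inl (j - 1)) + t₁.root.2 (.inr (j - 1)) ≤ h
    · by_cases h₂ : t₂.root.2 (.inl (j - 1)) + t₂.root.2 (.inr (j - 1)) ≤ h
      · exact ⟨[false], [true], incomparable_false_true,
          ⟨t₁, by simp [subtreeAt], ht₁, hlow.of_add.1, hq₁, h₁⟩,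
          ⟨t₂, by simp [subtreeAt], ht₂, hlow.of_add.2, hq₂, h₂⟩⟩
      · exact .of_nodeSatisfies (p := [false])
          ⟨t₁, by simp [subtreeAt], ih₁ ht₁ hlow.of_add.1 (by simp [hq₁, level]) (by omega)⟩
    · exact .of_nodeSatisfies (p := [true])
        ⟨t₂, by simp [subtreeAt], ih₂ ht₂ hlow.of_add.2 (by simp [hq₂, level]) (by omega)⟩

lemma LoopNode.hasIncomparablePair {k h : ℕ} (hk : 2 ≤ k) (hh : h + 1 ≤ tower (k - 1))
    {t : DTree BSt Cnt} (ht : LoopNode k h t) : HasIncomparablePair (LoopNode k (h + 1)) t := by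
  obtain ⟨ht, hlow, hq, hs⟩ := ht
  refine hasIncomparablePair_loopNode hk hh t ht hlow (by simp [hq, level]) ?_
  rw [weight_of_qinit_or_qloop _ (.inr hq)]
  omega

/-- Let `k > 1` and `D` be a `(qinit k, v₀)`-rooted `{qleaf}`-leaf-covering
deduction tree of `B_k`, with `v₀ (d_i) = v₀ (d'_i) = 0` for `1 ≤ i < k`.
Then for each `0 < h ≤ tower (k-1)`, `D` contains `2^h` pairwise
incomparable nodes with state label `qloop k` at which `d_{k-1} + d'_{k-1}`
is at most `h`. -/
theorem Bk_incomparable_nodes (k : ℕ) (hk : 1 < k) (v₀ : Cnt → ℕ)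
    (h0 : ∀ i, 1 ≤ i → i < k → v₀ (Sum.inl i) = 0 ∧ v₀ (Sum.inr i) = 0)
    (D : DTree BSt Cnt) (hD : IsDeduction (Bsys k) D)
    (hroot : D.root = (BSt.qinit k, v₀))
    (hcov : ∀ l ∈ D.leaves, l.1 = BSt.qleaf)
    (h : ℕ) (hpos : 0 < h) (hle : h ≤ tower (k - 1)) :
    ∃ S : Finset (List Bool), S.card = 2 ^ h ∧
      (∀ p₁ ∈ S, ∀ p₂ ∈ S, p₁ ≠ p₂ → Incomparable p₁ p₂) ∧
      ∀ p ∈ S, ∃ t : DTree BSt Cnt, subtreeAt D p = some t ∧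
        t.root.1 = BSt.qloop k ∧
        t.root.2 (Sum.inl (k - 1)) + t.root.2 (Sum.inr (k - 1)) ≤ h := by
  have hpair : HasIncomparablePair (LoopNode k 1) D := by
    refine hasIncomparablePair_loopNode hk (by omega) D ⟨hD, hcov⟩
      (by rw [hroot]; exact LowZero.mono (m' := k) h0 (by omega)) (by simp [hroot, level]) ?_
    obtain ⟨ha, hb⟩ := h0 (k - 1) (by omega) (by omega)
    rw [weight_of_qinit_or_qloop _ (.inl (by rw [hroot])), hroot]
    simp [ha, hb]
  have key : ∀ n, 1 ≤ n → n ≤ tower (k - 1) →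
      ∃ S : Finset (List Bool), S.card = 2 ^ n ∧ IsAntichainWith (LoopNode k n) D S := by
    intro n hn
    induction n, hn using Nat.le_induction with
    | base => exact fun _ => by simpa using (isAntichainWith_singleton_nil hpair).double fun _ => id
    | succ n _ ih =>
      intro hn
      obtain ⟨S, hcard, hS⟩ := ih (by omega)
      obtain ⟨S', hcard', hS'⟩ := hS.double fun _ => LoopNode.hasIncomparablePair hk hn
      exact ⟨S', by rw [hcard', hcard, pow_succ, mul_comm], hS'⟩
  obtain ⟨S, hcard, hS, hnodes⟩ := key h hpos hle
  refine ⟨S, hcard, hS, fun p hp => ?_⟩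
  obtain ⟨t, hpt, -, -, hq, hs⟩ := hnodes p hp
  exact ⟨t, hpt, hq, hs⟩
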